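/- Let G : P2(ℝ^d) → (−∞,+∞] be proper, lower semicontinuous with respect to W2, and convex along generalized geodesics, with argmin G nonempty, and let τ > 0. Then for all μ, ν ∈ P2(ℝ^d) the discrete EVI inequality holds: W2²(J_τ(μ), ν) − W2²(μ, ν) ≤ 2τ (G(ν) − G(J_τ(μ))) − W2²(J_τ(μ), μ), where J_τ(μ) is the unique minimizer of ν ↦ G(ν) + (1/(2τ)) W2²(ν, μ). -/

import Mathlib

open MeasureTheory Filter Topology ENNReal

noncomputable section

/-- Euclidean space ℝ^d. -/
abbrev Ed (d : ℕ) := EuclideanSpace ℝ (Fin d)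

/-- `P2 d`: Borel probability measures on ℝ^d with finite second moment. -/
def P2 (d : ℕ) : Set (Measure (Ed d)) :=
  {μ | IsProbabilityMeasure μ ∧ ∫⁻ x, ENNReal.ofReal (‖x‖ ^ 2) ∂μ < ⊤}

/-- A coupling of `μ` and `ν`. -/
def IsCoupling {d : ℕ} (γ : Measure (Ed d × Ed d)) (μ ν : Measure (Ed d)) : Prop :=
  IsProbabilityMeasure γ ∧ γ.map Prod.fst = μ ∧ γ.map Prod.snd = ν

/-- `p`-th power transport cost of a plan `γ`. -/
def Wcost {d : ℕ} (p : ℝ) (γ : Measure (Ed d × Ed d)) : ℝ≥0∞ :=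
  ∫⁻ z, ENNReal.ofReal (‖z.1 - z.2‖ ^ p) ∂γ

/-- Minimal `p`-th power transport cost between `μ` and `ν`. -/
def minCost {d : ℕ} (p : ℝ) (μ ν : Measure (Ed d)) : ℝ≥0∞ :=
  ⨅ γ : {γ : Measure (Ed d × Ed d) // IsCoupling γ μ ν}, Wcost p γ.1

/-- The `p`-Wasserstein distance. -/
def Wp {d : ℕ} (p : ℝ) (μ ν : Measure (Ed d)) : ℝ :=
  (minCost p μ ν ^ (1 / p)).toReal

/-- The 2-Wasserstein distance. -/
def W2 {d : ℕ} (μ ν : Measure (Ed d)) : ℝ := Wp 2 μ ν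

/-- Optimal transport plan for the quadratic cost. -/
def IsOptimalPlan {d : ℕ} (γ : Measure (Ed d × Ed d)) (μ ν : Measure (Ed d)) : Prop :=
  IsCoupling γ μ ν ∧ Wcost 2 γ = minCost 2 μ ν

/-- `curve` is a generalized geodesic between `μ0` and `μ1` with base `base`. -/
def IsGenGeodesic {d : ℕ} (curve : ℝ → Measure (Ed d))
    (μ0 μ1 base : Measure (Ed d)) : Prop :=
  ∃ γ : Measure (Ed d × Ed d × Ed d),
    IsProbabilityMeasure γ ∧
    IsOptimalPlan (γ.map (fun z => (z.1, z.2.1))) base μ0 ∧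
    IsOptimalPlan (γ.map (fun z => (z.1, z.2.2))) base μ1 ∧
    ∀ t ∈ Set.Icc (0 : ℝ) 1,
      curve t = γ.map (fun z => (1 - t) • z.2.1 + t • z.2.2)

/-- Convexity along generalized geodesics. -/
def ConvexAlongGenGeod {d : ℕ} (G : Measure (Ed d) → EReal) : Prop :=
  ∀ μ0 ∈ P2 d, ∀ μ1 ∈ P2 d, ∀ base ∈ P2 d,
    ∃ curve : ℝ → Measure (Ed d), IsGenGeodesic curve μ0 μ1 base ∧
      ∀ t ∈ Set.Icc (0 : ℝ) 1,
        G (curve t) ≤ ((1 - t : ℝ) : EReal) * G μ0 + ((t : ℝ) : EReal) * G μ1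

/-- `G` is proper: never `⊥` and finite somewhere on `P2`. -/
def ProperOn {d : ℕ} (G : Measure (Ed d) → EReal) : Prop :=
  (∀ μ, G μ ≠ ⊥) ∧ ∃ μ ∈ P2 d, G μ ≠ ⊤

/-- Sequential lower semicontinuity with respect to `W2`. -/
def LscW2 {d : ℕ} (G : Measure (Ed d) → EReal) : Prop :=
  ∀ μ ∈ P2 d, ∀ s : ℕ → Measure (Ed d), (∀ n, s n ∈ P2 d) →
    Tendsto (fun n => W2 (s n) μ) atTop (𝓝 0) →
    G μ ≤ liminf (fun n => G (s n)) atTop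

/-- The JKO (Moreau–Yosida) energy `ν ↦ G ν + (1/(2τ)) W2²(ν, μ)`. -/
def JKOEnergy {d : ℕ} (G : Measure (Ed d) → EReal) (τ : ℝ)
    (μ ν : Measure (Ed d)) : EReal :=
  G ν + ((1 / (2 * τ) * (W2 ν μ) ^ 2 : ℝ) : EReal)

/-- `ν` is a minimizer over `P2` of the JKO energy with base point `μ`. -/
def IsJKOMin {d : ℕ} (G : Measure (Ed d) → EReal) (τ : ℝ)
    (μ ν : Measure (Ed d)) : Prop :=
  ν ∈ P2 d ∧ ∀ ρ ∈ P2 d, JKOEnergy G τ μ ν ≤ JKOEnergy G τ μ ρ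

/-- `μ` is a global minimizer of `G` over `P2`. -/
def IsArgminG {d : ℕ} (G : Measure (Ed d) → EReal) (μ : Measure (Ed d)) : Prop :=
  μ ∈ P2 d ∧ ∀ ν ∈ P2 d, G μ ≤ G ν

/-- The infimum of `G` over `P2`. -/
def infG {d : ℕ} (G : Measure (Ed d) → EReal) : EReal := sInf (G '' P2 d)

/-- Convergence in the topology `τ_{w,2}`: integrals of continuous functions with
subquadratic growth converge. -/
def TendstoWeak2 {d : ℕ} (s : ℕ → Measure (Ed d)) (μ : Measure (Ed d)) : Prop :=
  ∀ f : Ed d → ℝ, Continuous f →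
    Tendsto (fun x => f x / (1 + ‖x‖ ^ 2)) (comap (fun x : Ed d => ‖x‖) atTop) (𝓝 0) →
    Tendsto (fun n => ∫ x, f x ∂(s n)) atTop (𝓝 (∫ x, f x ∂μ))

/-- Narrow convergence: integrals of bounded continuous functions converge. -/
def TendstoNarrow {d : ℕ} (s : ℕ → Measure (Ed d)) (μ : Measure (Ed d)) : Prop :=
  ∀ f : Ed d → ℝ, Continuous f → (∃ M, ∀ x, |f x| ≤ M) →
    Tendsto (fun n => ∫ x, f x ∂(s n)) atTop (𝓝 (∫ x, f x ∂μ))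

/-- The pushforward by the explicit gradient step `x ↦ x - τ ∇F(x)`. -/
def gradStep {d : ℕ} (f' : Ed d → Ed d) (τ : ℝ) (μ : Measure (Ed d)) : Measure (Ed d) :=
  μ.map (fun x => x - τ • f' x)

/-- The composite objective `G(μ) = ∫ F dμ + H(μ)`. -/
def Gsum {d : ℕ} (F : Ed d → ℝ) (H : Measure (Ed d) → EReal)
    (μ : Measure (Ed d)) : EReal :=
  ((∫ x, F x ∂μ : ℝ) : EReal) + H μ

end

section EVIHelpers
open MeasureTheory ENNReal
variable {d : ℕ}

private theorem aux_id {E : Type*} [NormedAddCommGroup E] [InnerProductSpace ℝ E]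
    (t : ℝ) (u v : E) :
    ‖(1-t)•u + t•v‖^2 = (1-t)*‖u‖^2 + t*‖v‖^2 - t*(1-t)*‖v-u‖^2 := by
  rw [norm_add_sq_real, norm_sub_sq_real, real_inner_smul_left, real_inner_smul_right,
    norm_smul, norm_smul, Real.norm_eq_abs, Real.norm_eq_abs, mul_pow, mul_pow, sq_abs, sq_abs,
    real_inner_comm v u]
  ring

private theorem hilbert_id {E : Type*} [NormedAddCommGroup E] [InnerProductSpace ℝ E]
    (t : ℝ) (x y z : E) :
    ‖x - ((1-t)•y + t•z)‖^2 = (1-t)*‖x-y‖^2 + t*‖x-z‖^2 - t*(1-t)*‖y-z‖^2 := by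
  have hx : x - ((1-t)•y + t•z) = (1-t)•(x-y) + t•(x-z) := by module
  have hyz : y - z = (x - z) - (x - y) := by abel
  rw [hx, hyz, aux_id]

private theorem wcost_two (γ : Measure (Ed d × Ed d)) :
    Wcost 2 γ = ∫⁻ z, ENNReal.ofReal (‖z.1 - z.2‖ ^ (2:ℕ)) ∂γ := by
  unfold Wcost
  congr 1; funext z
  rw [show ((2:ℝ)) = ((2:ℕ):ℝ) by norm_num, Real.rpow_natCast]

private theorem sq_ofReal_measurable :
    Measurable (fun z : Ed d × Ed d => ENNReal.ofReal (‖z.1 - z.2‖ ^ (2:ℕ))) := by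
  exact (ENNReal.continuous_ofReal.comp
    (((continuous_fst.sub continuous_snd).norm).pow 2)).measurable

private theorem minCost_le {γ : Measure (Ed d × Ed d)} {μ ν : Measure (Ed d)}
    (h : IsCoupling γ μ ν) : minCost 2 μ ν ≤ Wcost 2 γ :=
  iInf_le (fun γ : {γ : Measure (Ed d × Ed d) // IsCoupling γ μ ν} => Wcost 2 γ.1) ⟨γ, h⟩

private theorem isCoupling_swap {γ : Measure (Ed d × Ed d)} {μ ν : Measure (Ed d)}
    (h : IsCoupling γ μ ν) : IsCoupling (γ.map Prod.swap) ν μ := by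
  obtain ⟨hp, h1, h2⟩ := h
  haveI := hp
  refine ⟨Measure.isProbabilityMeasure_map measurable_swap.aemeasurable, ?_, ?_⟩
  · rw [Measure.map_map measurable_fst measurable_swap]; exact h2
  · rw [Measure.map_map measurable_snd measurable_swap]; exact h1

private theorem wcost_swap (γ : Measure (Ed d × Ed d)) :
    Wcost 2 (γ.map Prod.swap) = Wcost 2 γ := by
  rw [wcost_two, wcost_two, lintegral_map sq_ofReal_measurable measurable_swap]
  congr 1; funext z
  simp [Prod.swap, norm_sub_rev]

private theorem minCost_symm (μ ν : Measure (Ed d)) : minCost 2 μ ν = minCost 2 ν μ := by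
  have key : ∀ α β : Measure (Ed d), minCost 2 α β ≤ minCost 2 β α := by
    intro α β
    refine le_iInf fun γ => ?_
    calc minCost 2 α β ≤ Wcost 2 (γ.1.map Prod.swap) := minCost_le (isCoupling_swap γ.2)
    _ = Wcost 2 γ.1 := wcost_swap γ.1
  exact le_antisymm (key μ ν) (key ν μ)

private theorem W2_sq (μ ν : Measure (Ed d)) : (W2 μ ν) ^ 2 = (minCost 2 μ ν).toReal := by
  unfold W2 Wp
  rw [← ENNReal.toReal_rpow, ← Real.rpow_natCast ((minCost 2 μ ν).toReal ^ ((1:ℝ)/2)) 2,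
    ← Real.rpow_mul ENNReal.toReal_nonneg]
  norm_num

private theorem minCost_ne_top {μ ν : Measure (Ed d)} (hμ : μ ∈ P2 d) (hν : ν ∈ P2 d) :
    minCost 2 μ ν ≠ ⊤ := by
  haveI := hμ.1; haveI := hν.1
  have hcoup : IsCoupling (μ.prod ν) μ ν := by
    refine ⟨inferInstance, ?_, ?_⟩
    · rw [Measure.map_fst_prod]; simp
    · rw [Measure.map_snd_prod]; simp
  have hms : Measurable (fun x : Ed d => ENNReal.ofReal (‖x‖ ^ 2)) :=
    (ENNReal.continuous_ofReal.comp (continuous_norm.pow 2)).measurable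
  have hle : Wcost 2 (μ.prod ν) ≤ 2 * (∫⁻ x, ENNReal.ofReal (‖x‖ ^ 2) ∂μ)
      + 2 * (∫⁻ x, ENNReal.ofReal (‖x‖ ^ 2) ∂ν) := by
    rw [wcost_two]
    calc ∫⁻ z, ENNReal.ofReal (‖z.1 - z.2‖ ^ (2:ℕ)) ∂(μ.prod ν)
        ≤ ∫⁻ z : Ed d × Ed d, (2 * ENNReal.ofReal (‖z.1‖ ^ 2)
            + 2 * ENNReal.ofReal (‖z.2‖ ^ 2)) ∂(μ.prod ν) := by
          refine lintegral_mono fun z => ?_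
          have h1 : ‖z.1 - z.2‖ ^ (2:ℕ) ≤ 2 * ‖z.1‖ ^ 2 + 2 * ‖z.2‖ ^ 2 := by
            have := norm_sub_le z.1 z.2
            nlinarith [pow_le_pow_left₀ (norm_nonneg (z.1 - z.2)) this 2,
              sq_nonneg (‖z.1‖ - ‖z.2‖)]
          calc ENNReal.ofReal (‖z.1 - z.2‖ ^ (2:ℕ))
              ≤ ENNReal.ofReal (2 * ‖z.1‖ ^ 2 + 2 * ‖z.2‖ ^ 2) := ENNReal.ofReal_le_ofReal h1
          _ ≤ 2 * ENNReal.ofReal (‖z.1‖ ^ 2) + 2 * ENNReal.ofReal (‖z.2‖ ^ 2) := by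
              rw [ENNReal.ofReal_add (by positivity) (by positivity),
                ENNReal.ofReal_mul (by norm_num), ENNReal.ofReal_mul (by norm_num)]
              simp [ENNReal.ofReal_ofNat]
      _ = 2 * (∫⁻ x, ENNReal.ofReal (‖x‖ ^ 2) ∂μ)
          + 2 * (∫⁻ x, ENNReal.ofReal (‖x‖ ^ 2) ∂ν) := by
          have hm1 : Measurable (fun z : Ed d × Ed d => ENNReal.ofReal (‖z.1‖ ^ 2)) := by fun_prop
          have hm2 : Measurable (fun z : Ed d × Ed d => ENNReal.ofReal (‖z.2‖ ^ 2)) := by fun_prop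
          rw [lintegral_add_left (hm1.const_mul 2)]
          rw [lintegral_const_mul 2 hm1, lintegral_const_mul 2 hm2]
          congr 1
          · congr 1
            rw [← lintegral_map hms measurable_fst, hcoup.2.1]
          · congr 1
            rw [← lintegral_map hms measurable_snd, hcoup.2.2]
  have : minCost 2 μ ν < ⊤ := lt_of_le_of_lt (minCost_le hcoup) (lt_of_le_of_lt hle
    (ENNReal.add_lt_top.2 ⟨ENNReal.mul_lt_top (by norm_num) hμ.2,
      ENNReal.mul_lt_top (by norm_num) hν.2⟩))
  exact this.ne

private theorem nonneg_integral_eq {α : Type*} [MeasurableSpace α] [TopologicalSpace α]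
    [OpensMeasurableSpace α] (γ : Measure α) (f : α → ℝ) (hf : Continuous f)
    (h0 : ∀ x, 0 ≤ f x) :
    ∫ x, f x ∂γ = (∫⁻ x, ENNReal.ofReal (f x) ∂γ).toReal :=
  integral_eq_lintegral_of_nonneg_ae (ae_of_all _ h0) hf.aestronglyMeasurable

private theorem nonneg_integrable {α : Type*} [MeasurableSpace α] [TopologicalSpace α]
    [OpensMeasurableSpace α] {γ : Measure α} {f : α → ℝ} (hf : Continuous f)
    (h0 : ∀ x, 0 ≤ f x) (hfin : ∫⁻ x, ENNReal.ofReal (f x) ∂γ ≠ ⊤) :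
    Integrable f γ := by
  refine ⟨hf.aestronglyMeasurable, ?_⟩
  rw [hasFiniteIntegral_iff_ofReal (ae_of_all _ h0)]
  exact lt_top_iff_ne_top.2 hfin

end EVIHelpers

set_option maxHeartbeats 2000000 in
/-- Discrete EVI inequality for the JKO step:
`W2²(J_τ μ, ν) − W2²(μ, ν) ≤ 2τ (G ν − G (J_τ μ)) − W2²(J_τ μ, μ)`,
written additively to avoid undefined subtraction in `EReal`. -/
theorem jko_discrete_EVI {d : ℕ} (G : Measure (Ed d) → EReal)
    (hProper : ProperOn G) (hLsc : LscW2 G) (hConv : ConvexAlongGenGeod G)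
    (hArgmin : ∃ μstar, IsArgminG G μstar) (τ : ℝ) (hτ : 0 < τ)
    (J : Measure (Ed d) → Measure (Ed d))
    (hJ : ∀ μ ∈ P2 d, IsJKOMin G τ μ (J μ)) :
    ∀ μ ∈ P2 d, ∀ ν ∈ P2 d,
      (((W2 (J μ) ν) ^ 2 : ℝ) : EReal) + ((2 * τ : ℝ) : EReal) * G (J μ) ≤
        (((W2 μ ν) ^ 2 - (W2 (J μ) μ) ^ 2 : ℝ) : EReal) + ((2 * τ : ℝ) : EReal) * G ν := by
  intro μ hμ ν hν
  obtain ⟨hμτP2, hmin⟩ := hJ μ hμ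
  set μτ := J μ with hμτdef
  -- case G ν = ⊤
  by_cases hg1top : G ν = ⊤
  · rw [hg1top, EReal.mul_top_of_pos (by exact_mod_cast (by linarith : (0:ℝ) < 2*τ)),
      EReal.add_top_of_ne_bot (EReal.coe_ne_bot _)]
    exact le_top
  obtain ⟨hbot, ρ, hρP2, hρtop⟩ := hProper
  -- G μτ is finite
  have hg0top : G μτ ≠ ⊤ := by
    intro h
    have h1 := hmin ρ hρP2
    unfold JKOEnergy at h1
    rw [h, EReal.top_add_of_ne_bot (EReal.coe_ne_bot _)] at h1
    obtain ⟨r, hr⟩ : ∃ r : ℝ, G ρ = (r : EReal) :=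
      ⟨(G ρ).toReal, (EReal.coe_toReal hρtop (hbot ρ)).symm⟩
    rw [hr, ← EReal.coe_add] at h1
    exact (EReal.coe_lt_top _).not_ge h1
  obtain ⟨r0, hr0⟩ : ∃ r : ℝ, G μτ = (r : EReal) :=
    ⟨(G μτ).toReal, (EReal.coe_toReal hg0top (hbot μτ)).symm⟩
  obtain ⟨r1, hr1⟩ : ∃ r : ℝ, G ν = (r : EReal) :=
    ⟨(G ν).toReal, (EReal.coe_toReal hg1top (hbot ν)).symm⟩
  -- the generalized geodesic
  obtain ⟨curve, ⟨γ, hγprob, h12, h13, hcurve⟩, hGconv⟩ := hConv μτ hμτP2 ν hν μ hμ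
  haveI := hγprob
  haveI := hμ.1
  haveI := hμτP2.1
  haveI := hν.1
  -- measurability of projections
  have mX : Measurable (fun z : Ed d × Ed d × Ed d => z.1) := measurable_fst
  have mY : Measurable (fun z : Ed d × Ed d × Ed d => z.2.1) :=
    measurable_fst.comp measurable_snd
  have mZ : Measurable (fun z : Ed d × Ed d × Ed d => z.2.2) :=
    measurable_snd.comp measurable_snd
  have m12 : Measurable (fun z : Ed d × Ed d × Ed d => (z.1, z.2.1)) := mX.prodMk mY
  have m13 : Measurable (fun z : Ed d × Ed d × Ed d => (z.1, z.2.2)) := mX.prodMk mZ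
  have m23 : Measurable (fun z : Ed d × Ed d × Ed d => (z.2.1, z.2.2)) := mY.prodMk mZ
  -- marginals
  have hX : γ.map (fun z : Ed d × Ed d × Ed d => z.1) = μ := by
    have h := h12.1.2.1
    rw [Measure.map_map measurable_fst m12] at h
    exact h
  have hY : γ.map (fun z : Ed d × Ed d × Ed d => z.2.1) = μτ := by
    have h := h12.1.2.2
    rw [Measure.map_map measurable_snd m12] at h
    exact h
  have hZ : γ.map (fun z : Ed d × Ed d × Ed d => z.2.2) = ν := by
    have h := h13.1.2.2
    rw [Measure.map_map measurable_snd m13] at h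
    exact h
  -- the three cost integrals
  have hA : ∫⁻ z, ENNReal.ofReal (‖z.1 - z.2.1‖ ^ 2) ∂γ = minCost 2 μ μτ := by
    rw [← h12.2, wcost_two, lintegral_map sq_ofReal_measurable m12]
  have hB : ∫⁻ z, ENNReal.ofReal (‖z.1 - z.2.2‖ ^ 2) ∂γ = minCost 2 μ ν := by
    rw [← h13.2, wcost_two, lintegral_map sq_ofReal_measurable m13]
  have hAne : minCost 2 μ μτ ≠ ⊤ := minCost_ne_top hμ hμτP2
  have hBne : minCost 2 μ ν ≠ ⊤ := minCost_ne_top hμ hν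
  have hCcoup : IsCoupling (γ.map (fun z : Ed d × Ed d × Ed d => (z.2.1, z.2.2))) μτ ν := by
    refine ⟨Measure.isProbabilityMeasure_map m23.aemeasurable, ?_, ?_⟩
    · rw [Measure.map_map measurable_fst m23]; exact hY
    · rw [Measure.map_map measurable_snd m23]; exact hZ
  have hCW : Wcost 2 (γ.map (fun z : Ed d × Ed d × Ed d => (z.2.1, z.2.2)))
      = ∫⁻ z, ENNReal.ofReal (‖z.2.1 - z.2.2‖ ^ 2) ∂γ := by
    rw [wcost_two, lintegral_map sq_ofReal_measurable m23]
  have hCge : minCost 2 μτ ν ≤ ∫⁻ z, ENNReal.ofReal (‖z.2.1 - z.2.2‖ ^ 2) ∂γ :=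
    hCW ▸ minCost_le hCcoup
  have hma : Measurable (fun z : Ed d × Ed d × Ed d => ENNReal.ofReal (‖z.1 - z.2.1‖ ^ 2)) := by
    fun_prop
  have hmb : Measurable (fun z : Ed d × Ed d × Ed d => ENNReal.ofReal (‖z.1 - z.2.2‖ ^ 2)) := by
    fun_prop
  have hCne : ∫⁻ z, ENNReal.ofReal (‖z.2.1 - z.2.2‖ ^ 2) ∂γ ≠ ⊤ := by
    have hpt : ∀ z : Ed d × Ed d × Ed d, ENNReal.ofReal (‖z.2.1 - z.2.2‖ ^ 2)
        ≤ 2 * ENNReal.ofReal (‖z.1 - z.2.1‖ ^ 2) + 2 * ENNReal.ofReal (‖z.1 - z.2.2‖ ^ 2) := by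
      intro z
      have h1 : ‖z.2.1 - z.2.2‖ ≤ ‖z.1 - z.2.1‖ + ‖z.1 - z.2.2‖ := by
        have := norm_sub_le (z.1 - z.2.2) (z.1 - z.2.1)
        have he : z.1 - z.2.2 - (z.1 - z.2.1) = z.2.1 - z.2.2 := by abel
        rw [he] at this
        calc ‖z.2.1 - z.2.2‖ ≤ ‖z.1 - z.2.2‖ + ‖z.1 - z.2.1‖ := this
        _ = ‖z.1 - z.2.1‖ + ‖z.1 - z.2.2‖ := by ring
      have h2 : ‖z.2.1 - z.2.2‖ ^ 2 ≤ 2 * ‖z.1 - z.2.1‖ ^ 2 + 2 * ‖z.1 - z.2.2‖ ^ 2 := by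
        nlinarith [pow_le_pow_left₀ (norm_nonneg (z.2.1 - z.2.2)) h1 2,
          sq_nonneg (‖z.1 - z.2.1‖ - ‖z.1 - z.2.2‖)]
      calc ENNReal.ofReal (‖z.2.1 - z.2.2‖ ^ 2)
          ≤ ENNReal.ofReal (2 * ‖z.1 - z.2.1‖ ^ 2 + 2 * ‖z.1 - z.2.2‖ ^ 2) :=
            ENNReal.ofReal_le_ofReal h2
      _ ≤ _ := by
            rw [ENNReal.ofReal_add (by positivity) (by positivity),
              ENNReal.ofReal_mul (by norm_num), ENNReal.ofReal_mul (by norm_num)]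
            simp [ENNReal.ofReal_ofNat]
    have hle := lintegral_mono (μ := γ) hpt
    rw [lintegral_add_left (hma.const_mul 2), lintegral_const_mul 2 hma,
      lintegral_const_mul 2 hmb, hA, hB] at hle
    exact ne_top_of_le_ne_top
      (ENNReal.add_lt_top.2 ⟨ENNReal.mul_lt_top (by norm_num) (lt_top_iff_ne_top.2 hAne),
        ENNReal.mul_lt_top (by norm_num) (lt_top_iff_ne_top.2 hBne)⟩).ne hle
  -- real-valued integrals
  have hconta : Continuous (fun z : Ed d × Ed d × Ed d => ‖z.1 - z.2.1‖ ^ 2) := by fun_prop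
  have hcontb : Continuous (fun z : Ed d × Ed d × Ed d => ‖z.1 - z.2.2‖ ^ 2) := by fun_prop
  have hcontc : Continuous (fun z : Ed d × Ed d × Ed d => ‖z.2.1 - z.2.2‖ ^ 2) := by fun_prop
  have h0a : ∀ z : Ed d × Ed d × Ed d, 0 ≤ ‖z.1 - z.2.1‖ ^ 2 := fun z => by positivity
  have h0b : ∀ z : Ed d × Ed d × Ed d, 0 ≤ ‖z.1 - z.2.2‖ ^ 2 := fun z => by positivity
  have h0c : ∀ z : Ed d × Ed d × Ed d, 0 ≤ ‖z.2.1 - z.2.2‖ ^ 2 := fun z => by positivity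
  have hInta : Integrable (fun z : Ed d × Ed d × Ed d => ‖z.1 - z.2.1‖ ^ 2) γ :=
    nonneg_integrable hconta h0a (by rw [hA]; exact hAne)
  have hIntb : Integrable (fun z : Ed d × Ed d × Ed d => ‖z.1 - z.2.2‖ ^ 2) γ :=
    nonneg_integrable hcontb h0b (by rw [hB]; exact hBne)
  have hIntc : Integrable (fun z : Ed d × Ed d × Ed d => ‖z.2.1 - z.2.2‖ ^ 2) γ :=
    nonneg_integrable hcontc h0c hCne
  obtain ⟨A', hA'def⟩ : ∃ x : ℝ, x = (minCost 2 μ μτ).toReal := ⟨_, rfl⟩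
  obtain ⟨B', hB'def⟩ : ∃ x : ℝ, x = (minCost 2 μ ν).toReal := ⟨_, rfl⟩
  obtain ⟨C', hC'def⟩ : ∃ x : ℝ, x = (∫⁻ z, ENNReal.ofReal (‖z.2.1 - z.2.2‖ ^ 2) ∂γ).toReal :=
    ⟨_, rfl⟩
  have hIa : ∫ z, ‖z.1 - z.2.1‖ ^ 2 ∂γ = A' := by
    rw [nonneg_integral_eq γ _ hconta h0a, hA]; exact hA'def.symm
  have hIb : ∫ z, ‖z.1 - z.2.2‖ ^ 2 ∂γ = B' := by
    rw [nonneg_integral_eq γ _ hcontb h0b, hB]; exact hB'def.symm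
  have hIc : ∫ z, ‖z.2.1 - z.2.2‖ ^ 2 ∂γ = C' := by
    rw [nonneg_integral_eq γ _ hcontc h0c]; exact hC'def.symm
  have hW2A : W2 μτ μ ^ 2 = A' := by rw [W2_sq, minCost_symm]; exact hA'def.symm
  have hW2B : W2 μ ν ^ 2 = B' := by rw [W2_sq]; exact hB'def.symm
  -- key inequality for each t ∈ (0,1]
  have key : ∀ t : ℝ, 0 < t → t ≤ 1 → 2*τ*(r0 - r1) ≤ B' - A' - (1-t)*C' := by
    intro t ht0 ht1
    have htIcc : t ∈ Set.Icc (0:ℝ) 1 := ⟨le_of_lt ht0, ht1⟩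
    have hct := hcurve t htIcc
    have hmtc : Continuous (fun z : Ed d × Ed d × Ed d => (1-t) • z.2.1 + t • z.2.2) := by
      fun_prop
    -- curve t ∈ P2
    have hprob : IsProbabilityMeasure (curve t) := by
      rw [hct]; exact Measure.isProbabilityMeasure_map hmtc.measurable.aemeasurable
    have hmomn : Measurable (fun x : Ed d => ENNReal.ofReal (‖x‖ ^ 2)) := by fun_prop
    have hmom : ∫⁻ x, ENNReal.ofReal (‖x‖ ^ 2) ∂(curve t) < ⊤ := by
      rw [hct, lintegral_map hmomn hmtc.measurable]
      have hpt : ∀ z : Ed d × Ed d × Ed d,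
          ENNReal.ofReal (‖(1-t) • z.2.1 + t • z.2.2‖ ^ 2)
          ≤ 2 * ENNReal.ofReal (‖z.2.1‖ ^ 2) + 2 * ENNReal.ofReal (‖z.2.2‖ ^ 2) := by
        intro z
        have h1 : ‖(1-t) • z.2.1 + t • z.2.2‖ ≤ ‖z.2.1‖ + ‖z.2.2‖ := by
          have := norm_add_le ((1-t) • z.2.1) (t • z.2.2)
          rw [norm_smul, norm_smul, Real.norm_eq_abs, Real.norm_eq_abs,
            abs_of_nonneg (by linarith), abs_of_nonneg (by linarith)] at this
          have hy := norm_nonneg z.2.1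
          have hz := norm_nonneg z.2.2
          nlinarith
        have h2 : ‖(1-t) • z.2.1 + t • z.2.2‖ ^ 2 ≤ 2 * ‖z.2.1‖ ^ 2 + 2 * ‖z.2.2‖ ^ 2 := by
          nlinarith [pow_le_pow_left₀ (norm_nonneg ((1-t) • z.2.1 + t • z.2.2)) h1 2,
            sq_nonneg (‖z.2.1‖ - ‖z.2.2‖)]
        calc ENNReal.ofReal (‖(1-t) • z.2.1 + t • z.2.2‖ ^ 2)
            ≤ ENNReal.ofReal (2 * ‖z.2.1‖ ^ 2 + 2 * ‖z.2.2‖ ^ 2) := ENNReal.ofReal_le_ofReal h2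
        _ ≤ _ := by
              rw [ENNReal.ofReal_add (by positivity) (by positivity),
                ENNReal.ofReal_mul (by norm_num), ENNReal.ofReal_mul (by norm_num)]
              simp [ENNReal.ofReal_ofNat]
      have hm1 : Measurable (fun z : Ed d × Ed d × Ed d => ENNReal.ofReal (‖z.2.1‖ ^ 2)) := by
        fun_prop
      have hm2 : Measurable (fun z : Ed d × Ed d × Ed d => ENNReal.ofReal (‖z.2.2‖ ^ 2)) := by
        fun_prop
      have hle := lintegral_mono (μ := γ) hpt
      rw [lintegral_add_left (hm1.const_mul 2), lintegral_const_mul 2 hm1,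
        lintegral_const_mul 2 hm2] at hle
      have he1 : ∫⁻ z, ENNReal.ofReal (‖z.2.1‖ ^ 2) ∂γ
          = ∫⁻ x, ENNReal.ofReal (‖x‖ ^ 2) ∂μτ := by rw [← hY, lintegral_map hmomn mY]
      have he2 : ∫⁻ z, ENNReal.ofReal (‖z.2.2‖ ^ 2) ∂γ
          = ∫⁻ x, ENNReal.ofReal (‖x‖ ^ 2) ∂ν := by rw [← hZ, lintegral_map hmomn mZ]
      rw [he1, he2] at hle
      exact lt_of_le_of_lt hle (ENNReal.add_lt_top.2
        ⟨ENNReal.mul_lt_top (by norm_num) hμτP2.2, ENNReal.mul_lt_top (by norm_num) hν.2⟩)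
    have hctP2 : curve t ∈ P2 d := ⟨hprob, hmom⟩
    -- coupling between curve t and μ
    have hκm : Measurable (fun z : Ed d × Ed d × Ed d =>
        ((1-t) • z.2.1 + t • z.2.2, z.1)) := hmtc.measurable.prodMk mX
    have hκ : IsCoupling (γ.map (fun z : Ed d × Ed d × Ed d =>
        ((1-t) • z.2.1 + t • z.2.2, z.1))) (curve t) μ := by
      refine ⟨Measure.isProbabilityMeasure_map hκm.aemeasurable, ?_, ?_⟩
      · rw [Measure.map_map measurable_fst hκm, hct]; rfl
      · rw [Measure.map_map measurable_snd hκm]; exact hX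
    -- pointwise identity
    have hpt : ∀ z : Ed d × Ed d × Ed d, ‖((1-t) • z.2.1 + t • z.2.2) - z.1‖ ^ 2
        = (1-t)*‖z.1 - z.2.1‖ ^ 2 + t*‖z.1 - z.2.2‖ ^ 2 - t*(1-t)*‖z.2.1 - z.2.2‖ ^ 2 := by
      intro z
      rw [norm_sub_rev, hilbert_id t z.1 z.2.1 z.2.2]
    have hptnn : ∀ z : Ed d × Ed d × Ed d, 0 ≤ (1-t)*‖z.1 - z.2.1‖ ^ 2 + t*‖z.1 - z.2.2‖ ^ 2
        - t*(1-t)*‖z.2.1 - z.2.2‖ ^ 2 := by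
      intro z; rw [← hpt z]; positivity
    have hcontf : Continuous (fun z : Ed d × Ed d × Ed d =>
        (1-t)*‖z.1 - z.2.1‖ ^ 2 + t*‖z.1 - z.2.2‖ ^ 2 - t*(1-t)*‖z.2.1 - z.2.2‖ ^ 2) := by
      fun_prop
    -- bound on W2 (curve t) μ
    have hDle : minCost 2 (curve t) μ ≤ ∫⁻ z, ENNReal.ofReal ((1-t)*‖z.1 - z.2.1‖ ^ 2
        + t*‖z.1 - z.2.2‖ ^ 2 - t*(1-t)*‖z.2.1 - z.2.2‖ ^ 2) ∂γ := by
      refine le_trans (minCost_le hκ) ?_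
      rw [wcost_two, lintegral_map sq_ofReal_measurable hκm]
      refine le_of_eq ?_
      congr 1; funext z
      rw [hpt z]
    have hDne : ∫⁻ z, ENNReal.ofReal ((1-t)*‖z.1 - z.2.1‖ ^ 2
        + t*‖z.1 - z.2.2‖ ^ 2 - t*(1-t)*‖z.2.1 - z.2.2‖ ^ 2) ∂γ ≠ ⊤ := by
      have hpt2 : ∀ z : Ed d × Ed d × Ed d, ENNReal.ofReal ((1-t)*‖z.1 - z.2.1‖ ^ 2
          + t*‖z.1 - z.2.2‖ ^ 2 - t*(1-t)*‖z.2.1 - z.2.2‖ ^ 2)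
          ≤ ENNReal.ofReal (‖z.1 - z.2.1‖ ^ 2) + ENNReal.ofReal (‖z.1 - z.2.2‖ ^ 2) := by
        intro z
        have h3 : (1-t)*‖z.1 - z.2.1‖ ^ 2 + t*‖z.1 - z.2.2‖ ^ 2
            - t*(1-t)*‖z.2.1 - z.2.2‖ ^ 2 ≤ ‖z.1 - z.2.1‖ ^ 2 + ‖z.1 - z.2.2‖ ^ 2 := by
          nlinarith [h0a z, h0b z, h0c z, mul_nonneg (mul_nonneg ht0.le (by linarith : (0:ℝ) ≤ 1-t)) (h0c z)]
        calc ENNReal.ofReal _ ≤ ENNReal.ofReal (‖z.1 - z.2.1‖ ^ 2 + ‖z.1 - z.2.2‖ ^ 2) :=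
              ENNReal.ofReal_le_ofReal h3
        _ = _ := ENNReal.ofReal_add (h0a z) (h0b z)
      have hle := lintegral_mono (μ := γ) hpt2
      rw [lintegral_add_left hma, hA, hB] at hle
      exact ne_top_of_le_ne_top
        (ENNReal.add_lt_top.2 ⟨lt_top_iff_ne_top.2 hAne, lt_top_iff_ne_top.2 hBne⟩).ne hle
    have hWct : (W2 (curve t) μ) ^ 2 ≤ (1-t)*A' + t*B' - t*(1-t)*C' := by
      rw [W2_sq]
      calc (minCost 2 (curve t) μ).toReal
          ≤ (∫⁻ z, ENNReal.ofReal ((1-t)*‖z.1 - z.2.1‖ ^ 2 + t*‖z.1 - z.2.2‖ ^ 2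
              - t*(1-t)*‖z.2.1 - z.2.2‖ ^ 2) ∂γ).toReal := ENNReal.toReal_mono hDne hDle
      _ = ∫ z, ((1-t)*‖z.1 - z.2.1‖ ^ 2 + t*‖z.1 - z.2.2‖ ^ 2
              - t*(1-t)*‖z.2.1 - z.2.2‖ ^ 2) ∂γ := (nonneg_integral_eq γ _ hcontf hptnn).symm
      _ = (1-t)*A' + t*B' - t*(1-t)*C' := by
          have hint1 : Integrable (fun z : Ed d × Ed d × Ed d =>
              (1-t)*‖z.1 - z.2.1‖ ^ 2 + t*‖z.1 - z.2.2‖ ^ 2) γ :=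
            (hInta.const_mul (1-t)).add (hIntb.const_mul t)
          have hint3 : Integrable (fun z : Ed d × Ed d × Ed d =>
              t*(1-t)*‖z.2.1 - z.2.2‖ ^ 2) γ := hIntc.const_mul (t*(1-t))
          rw [integral_sub hint1 hint3,
            integral_add (hInta.const_mul (1-t)) (hIntb.const_mul t),
            integral_const_mul, integral_const_mul, integral_const_mul, hIa, hIb, hIc]
    -- JKO minimality + convexity
    have hjko := hmin (curve t) hctP2
    unfold JKOEnergy at hjko
    have hGct := hGconv t htIcc
    rw [hr0, hr1] at hGct
    have hchain : ((r0 + 1/(2*τ)*A' : ℝ) : EReal)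
        ≤ (((1-t)*r0 + t*r1 + 1/(2*τ)*(W2 (curve t) μ)^2 : ℝ) : EReal) := by
      calc ((r0 + 1/(2*τ)*A' : ℝ) : EReal)
          = G μτ + ((1/(2*τ)*(W2 μτ μ)^2 : ℝ) : EReal) := by
            rw [hr0, hW2A, ← EReal.coe_add]
      _ ≤ G (curve t) + ((1/(2*τ)*(W2 (curve t) μ)^2 : ℝ) : EReal) := hjko
      _ ≤ (((1-t)*r0 + t*r1 : ℝ) : EReal) + ((1/(2*τ)*(W2 (curve t) μ)^2 : ℝ) : EReal) := by
            refine add_le_add_left (le_trans hGct (le_of_eq ?_)) _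
            norm_cast
      _ = _ := by norm_cast
    have hreal : r0 + 1/(2*τ)*A' ≤ (1-t)*r0 + t*r1 + 1/(2*τ)*(W2 (curve t) μ)^2 := by
      exact_mod_cast hchain
    have hc : (0:ℝ) < 1/(2*τ) := by positivity
    have step1 : r0 + 1/(2*τ)*A'
        ≤ (1-t)*r0 + t*r1 + 1/(2*τ)*((1-t)*A' + t*B' - t*(1-t)*C') := by
      have := mul_le_mul_of_nonneg_left hWct hc.le
      linarith
    have hτ2 : (0:ℝ) < 2*τ := by linarith
    have h' := mul_le_mul_of_nonneg_right step1 hτ2.le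
    have e1 : (r0 + 1/(2*τ)*A') * (2*τ) = 2*τ*r0 + A' := by field_simp
    have e2 : ((1-t)*r0 + t*r1 + 1/(2*τ)*((1-t)*A' + t*B' - t*(1-t)*C')) * (2*τ)
        = 2*τ*((1-t)*r0 + t*r1) + ((1-t)*A' + t*B' - t*(1-t)*C') := by field_simp
    rw [e1, e2] at h'
    have hgoal : t*(2*τ*(r0 - r1)) ≤ t*(B' - A' - (1-t)*C') := by nlinarith [h']
    exact le_of_mul_le_mul_left hgoal ht0
  -- pass to the limit t → 0
  have hC'0 : 0 ≤ C' := hC'def ▸ ENNReal.toReal_nonneg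
  have hlim : 2*τ*(r0 - r1) ≤ B' - A' - C' := by
    refine le_of_forall_pos_le_add fun ε hε => ?_
    set t := min 1 (ε/(C'+1)) with htdef
    have ht0 : 0 < t := lt_min one_pos (by positivity)
    have ht1 : t ≤ 1 := min_le_left _ _
    have h := key t ht0 ht1
    have htε : t*C' ≤ ε := by
      calc t*C' ≤ (ε/(C'+1))*C' := mul_le_mul_of_nonneg_right (min_le_right _ _) hC'0
      _ ≤ ε := by
          rw [div_mul_eq_mul_div, div_le_iff₀ (by positivity)]
          nlinarith
    linarith
  -- conclusion
  have hW2C : (W2 μτ ν) ^ 2 ≤ C' := by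
    rw [W2_sq, hC'def]; exact ENNReal.toReal_mono hCne hCge
  rw [hr0, hr1]
  have hfinal : (W2 μτ ν)^2 + 2*τ*r0 ≤ ((W2 μ ν)^2 - (W2 μτ μ)^2) + 2*τ*r1 := by
    rw [hW2B, hW2A]; linarith
  calc (((W2 μτ ν) ^ 2 : ℝ) : EReal) + ((2 * τ : ℝ) : EReal) * ((r0:ℝ) : EReal)
      = (((W2 μτ ν) ^ 2 + 2*τ*r0 : ℝ) : EReal) := by norm_cast
  _ ≤ (((W2 μ ν) ^ 2 - (W2 μτ μ) ^ 2 + 2*τ*r1 : ℝ) : EReal) := by exact_mod_cast hfinal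
  _ = _ := by norm_cast
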